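/- Let t > 0 be a real number and let z be a nonzero real number with z² = t. Then h_{2L_n}(t) = h_{L_{n-1}-L_n}(z⁻¹) · h_{L_{n-1}+L_n}(−1) · h_{L_{n-1}+L_n}(−z⁻¹)⁻¹. -/

import Mathlib

open Matrix

noncomputable section

/-- 2n×2n real matrices. -/
abbrev SpMat (n : ℕ) := Matrix (Fin (2 * n)) (Fin (2 * n)) ℝ

/-- `EM n k l` is the elementary matrix with (k,l) entry 1 and all other entries 0. -/
def EM (n : ℕ) (k l : Fin (2 * n)) : SpMat n := Matrix.single k l 1

/- All indices below are 0-based: the 1-based indices n-1, n, 2n-1, 2n of the paper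
become n-2, n-1, 2n-2, 2n-1. -/

/-- x_{L_{n-1}-L_n}(t) = I + t (e_{n-1,n} - e_{2n,2n-1}). -/
def xpm (n : ℕ) (hn : 2 ≤ n) (t : ℝ) : SpMat n :=
  1 + t • (EM n ⟨n - 2, by omega⟩ ⟨n - 1, by omega⟩
    - EM n ⟨2 * n - 1, by omega⟩ ⟨2 * n - 2, by omega⟩)

/-- x_{L_n-L_{n-1}}(t) = I + t (e_{n,n-1} - e_{2n-1,2n}). -/
def xmp (n : ℕ) (hn : 2 ≤ n) (t : ℝ) : SpMat n :=
  1 + t • (EM n ⟨n - 1, by omega⟩ ⟨n - 2, by omega⟩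
    - EM n ⟨2 * n - 2, by omega⟩ ⟨2 * n - 1, by omega⟩)

/-- x_{L_{n-1}+L_n}(t) = I + t (e_{n-1,2n} + e_{n,2n-1}). -/
def xpp (n : ℕ) (hn : 2 ≤ n) (t : ℝ) : SpMat n :=
  1 + t • (EM n ⟨n - 2, by omega⟩ ⟨2 * n - 1, by omega⟩
    + EM n ⟨n - 1, by omega⟩ ⟨2 * n - 2, by omega⟩)

/-- x_{-L_{n-1}-L_n}(t) = I + t (e_{2n,n-1} + e_{2n-1,n}). -/
def xmm (n : ℕ) (hn : 2 ≤ n) (t : ℝ) : SpMat n :=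
  1 + t • (EM n ⟨2 * n - 1, by omega⟩ ⟨n - 2, by omega⟩
    + EM n ⟨2 * n - 2, by omega⟩ ⟨n - 1, by omega⟩)

/-- x_{2L_n}(t) = I + t e_{n,2n}. -/
def x2n (n : ℕ) (hn : 2 ≤ n) (t : ℝ) : SpMat n :=
  1 + t • EM n ⟨n - 1, by omega⟩ ⟨2 * n - 1, by omega⟩

/-- x_{-2L_n}(t) = I + t e_{2n,n}. -/
def xm2n (n : ℕ) (hn : 2 ≤ n) (t : ℝ) : SpMat n :=
  1 + t • EM n ⟨2 * n - 1, by omega⟩ ⟨n - 1, by omega⟩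

/-- x_{2L_{n-1}}(t) = I + t e_{n-1,2n-1}. -/
def x2n1 (n : ℕ) (hn : 2 ≤ n) (t : ℝ) : SpMat n :=
  1 + t • EM n ⟨n - 2, by omega⟩ ⟨2 * n - 2, by omega⟩

/-- x_{-2L_{n-1}}(t) = I + t e_{2n-1,n-1}. -/
def xm2n1 (n : ℕ) (hn : 2 ≤ n) (t : ℝ) : SpMat n :=
  1 + t • EM n ⟨2 * n - 2, by omega⟩ ⟨n - 2, by omega⟩

/-- w_{L_{n-1}-L_n}(t). -/
def wpm (n : ℕ) (hn : 2 ≤ n) (t : ℝ) : SpMat n :=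
  xpm n hn t * xmp n hn (-t⁻¹) * xpm n hn t

/-- w_{L_{n-1}+L_n}(t). -/
def wpp (n : ℕ) (hn : 2 ≤ n) (t : ℝ) : SpMat n :=
  xpp n hn t * xmm n hn (-t⁻¹) * xpp n hn t

/-- w_{2L_n}(t). -/
def w2n (n : ℕ) (hn : 2 ≤ n) (t : ℝ) : SpMat n :=
  x2n n hn t * xm2n n hn (-t⁻¹) * x2n n hn t

/-- w_{2L_{n-1}}(t). -/
def w2n1 (n : ℕ) (hn : 2 ≤ n) (t : ℝ) : SpMat n :=
  x2n1 n hn t * xm2n1 n hn (-t⁻¹) * x2n1 n hn t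

/-- h_{L_{n-1}-L_n}(t) = w_{L_{n-1}-L_n}(t) w_{L_{n-1}-L_n}(1)⁻¹. -/
def hpm (n : ℕ) (hn : 2 ≤ n) (t : ℝ) : SpMat n :=
  wpm n hn t * (wpm n hn 1)⁻¹

/-- h_{L_{n-1}+L_n}(t) = w_{L_{n-1}+L_n}(t) w_{L_{n-1}+L_n}(1)⁻¹. -/
def hpp (n : ℕ) (hn : 2 ≤ n) (t : ℝ) : SpMat n :=
  wpp n hn t * (wpp n hn 1)⁻¹

/-- h_{2L_n}(t) = w_{2L_n}(t) w_{2L_n}(1)⁻¹. -/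
def h2n (n : ℕ) (hn : 2 ≤ n) (t : ℝ) : SpMat n :=
  w2n n hn t * (w2n n hn 1)⁻¹

/-! For a pair of root vectors `e = f_r`, `f = f_{-r}` acting on a representation in which the
coroot of `r` has weights in `{-1, 0, 1}`, the relations `e² = f² = 0`, `efe = e`, `fef = f` hold,
and they force `w_r(t) = 1 - ef - fe + t e - t⁻¹ f` and hence
`h_r(t) = w_r(t) w_r(-1) = 1 + (t - 1) ef + (t⁻¹ - 1) fe`. For the three roots in question `ef`
and `fe` are diagonal idempotents, so every `h_r(t)` is diagonal, and the identity is checked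
entry by entry: on the coordinates `n-1, n, 2n-1, 2n` the right-hand side is
`(z⁻¹·(-1)·(-z), z·(-1)·(-z), z·(-1)·(-z)⁻¹, z⁻¹·(-1)·(-z)⁻¹) = (1, z², 1, z⁻²)`. -/

structure IsSL2Pair {A : Type*} [Ring A] (e f : A) : Prop where
  mul_self_left : e * e = 0
  mul_self_right : f * f = 0
  left_right_left : e * f * e = e
  right_left_right : f * e * f = f

def weylElement {K A : Type*} [Field K] [Ring A] [Algebra K A] (e f : A) (t : K) : A :=
  (1 + t • e) * (1 + (-t⁻¹) • f) * (1 + t • e)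

def torusElement {ι K : Type*} [Fintype ι] [DecidableEq ι] [Field K] (e f : Matrix ι ι K)
    (t : K) : Matrix ι ι K :=
  weylElement e f t * (weylElement e f (1 : K))⁻¹

def diagonalTorus {ι K : Type*} [DecidableEq ι] [Field K] (P Q : Finset ι) (t : K) :
    Matrix ι ι K :=
  diagonal fun i => if i ∈ P then t else if i ∈ Q then t⁻¹ else 1

namespace IsSL2Pair
variable {K A : Type*} [Field K] [Ring A] [Algebra K A] {e f : A}

theorem symm (h : IsSL2Pair e f) : IsSL2Pair f e :=
  ⟨h.mul_self_right, h.mul_self_left, h.right_left_right, h.left_right_left⟩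

theorem left_mul_left_mul (h : IsSL2Pair e f) (x : A) : e * (e * x) = 0 := by
  rw [← mul_assoc, h.mul_self_left, zero_mul]

theorem left_mul_right_mul_left (h : IsSL2Pair e f) : e * (f * e) = e := by
  rw [← mul_assoc, h.left_right_left]

theorem weylElement_eq (h : IsSL2Pair e f) {t : K} (ht : t ≠ 0) :
    weylElement e f t = 1 - e * f - f * e + t • e - t⁻¹ • f := by
  simp only [weylElement, mul_add, add_mul, one_mul, mul_one, smul_mul_assoc, mul_smul_comm,
    mul_assoc, h.left_mul_right_mul_left, h.mul_self_left, smul_zero]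
  match_scalars <;> field_simp
  ring

theorem weylElement_mul_weylElement_neg_one (h : IsSL2Pair e f) {t : K} (ht : t ≠ 0) :
    weylElement e f t * weylElement e f (-1 : K) =
      1 + (t - 1) • (e * f) + (t⁻¹ - 1) • (f * e) := by
  rw [h.weylElement_eq ht, h.weylElement_eq (neg_ne_zero.2 one_ne_zero)]
  simp only [mul_add, add_mul, mul_sub, sub_mul, one_mul, mul_one, smul_mul_assoc, mul_smul_comm,
    mul_assoc, h.mul_self_left, h.mul_self_right, h.left_mul_left_mul, h.symm.left_mul_left_mul,
    h.left_mul_right_mul_left, h.symm.left_mul_right_mul_left, mul_zero, smul_zero]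
  match_scalars <;> field_simp <;> ring

theorem torusElement_eq {ι : Type*} [Fintype ι] [DecidableEq ι] {e f : Matrix ι ι K}
    (h : IsSL2Pair e f) {t : K} (ht : t ≠ 0) :
    torusElement e f t = 1 + (t - 1) • (e * f) + (t⁻¹ - 1) • (f * e) := by
  have hinv : (weylElement e f (1 : K))⁻¹ = weylElement e f (-1 : K) :=
    inv_eq_right_inv (by simpa using h.weylElement_mul_weylElement_neg_one (one_ne_zero (α := K)))
  rw [torusElement, hinv, h.weylElement_mul_weylElement_neg_one ht]

end IsSL2Pair

section Roots
variable {ι K : Type*} [Fintype ι] [DecidableEq ι] [Field K] {p q r s : ι}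

theorem isSL2Pair_single (hqs : q ≠ s) : IsSL2Pair (single q s (1 : K)) (single s q 1) := by
  constructor <;> simp [single_mul_single_same, single_mul_single_of_ne, hqs, hqs.symm]

theorem torusElement_single (hqs : q ≠ s) {t : K} (ht : t ≠ 0) :
    torusElement (single q s (1 : K)) (single s q 1) t = diagonalTorus {q} {s} t := by
  rw [(isSL2Pair_single hqs).torusElement_eq ht, single_mul_single_same, single_mul_single_same]
  ext i j
  simp only [Matrix.add_apply, Matrix.smul_apply, one_apply, single_apply, diagonal_apply,
    diagonalTorus, Finset.mem_singleton, smul_eq_mul]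
  grind

section
variable (hpq : p ≠ q) (hpr : p ≠ r) (hps : p ≠ s) (hqr : q ≠ r) (hqs : q ≠ s) (hrs : r ≠ s)
include hpq hpr hps hqr hqs hrs

theorem isSL2Pair_single_sub :
    IsSL2Pair (single p q (1 : K) - single s r 1) (single q p 1 - single r s 1) := by
  constructor <;>
    simp [mul_sub, sub_mul, add_mul, single_mul_single_same, single_mul_single_of_ne, *, Ne.symm]

theorem isSL2Pair_single_add :
    IsSL2Pair (single p s (1 : K) + single q r 1) (single s p 1 + single r q 1) := by
  constructor <;>
    simp [mul_add, add_mul, single_mul_single_same, single_mul_single_of_ne, *, Ne.symm]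

theorem torusElement_single_sub {t : K} (ht : t ≠ 0) :
    torusElement (single p q (1 : K) - single s r 1) (single q p 1 - single r s 1) t =
      diagonalTorus {p, s} {q, r} t := by
  have hef : (single p q (1 : K) - single s r 1) * (single q p 1 - single r s 1) =
      single p p 1 + single s s 1 := by
    simp [mul_sub, sub_mul, single_mul_single_same, single_mul_single_of_ne, *, Ne.symm]
  have hfe : (single q p (1 : K) - single r s 1) * (single p q 1 - single s r 1) =
      single q q 1 + single r r 1 := by
    simp [mul_sub, sub_mul, single_mul_single_same, single_mul_single_of_ne, *, Ne.symm]
  rw [(isSL2Pair_single_sub hpq hpr hps hqr hqs hrs).torusElement_eq ht, hef, hfe]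
  ext i j
  simp only [Matrix.add_apply, Matrix.smul_apply, one_apply, single_apply, diagonal_apply,
    diagonalTorus, Finset.mem_insert, Finset.mem_singleton, smul_eq_mul]
  grind

theorem torusElement_single_add {t : K} (ht : t ≠ 0) :
    torusElement (single p s (1 : K) + single q r 1) (single s p 1 + single r q 1) t =
      diagonalTorus {p, q} {r, s} t := by
  have hef : (single p s (1 : K) + single q r 1) * (single s p 1 + single r q 1) =
      single p p 1 + single q q 1 := by
    simp [mul_add, add_mul, single_mul_single_same, single_mul_single_of_ne, *, Ne.symm]
  have hfe : (single s p (1 : K) + single r q 1) * (single p s 1 + single q r 1) =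
      single s s 1 + single r r 1 := by
    simp [mul_add, add_mul, single_mul_single_same, single_mul_single_of_ne, *, Ne.symm]
  rw [(isSL2Pair_single_add hpq hpr hps hqr hqs hrs).torusElement_eq ht, hef, hfe]
  ext i j
  simp only [Matrix.add_apply, Matrix.smul_apply, one_apply, single_apply, diagonal_apply,
    diagonalTorus, Finset.mem_insert, Finset.mem_singleton, smul_eq_mul]
  grind

end

theorem diagonalTorus_inv (P Q : Finset ι) {t : K} (ht : t ≠ 0) :
    (diagonalTorus P Q t)⁻¹ = diagonalTorus P Q t⁻¹ := by
  refine inv_eq_right_inv ?_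
  rw [diagonalTorus, diagonalTorus, diagonal_mul_diagonal, ← diagonal_one]
  congr 1
  funext i
  split_ifs <;> field_simp

theorem diagonalTorus_sq (hpq : p ≠ q) (hps : p ≠ s) (hqs : q ≠ s) {z : K} (hz : z ≠ 0) :
    diagonalTorus {q} {s} (z ^ 2) =
      diagonalTorus {p, s} {q, r} z⁻¹ * diagonalTorus {p, q} {r, s} (-1) *
        diagonalTorus {p, q} {r, s} (-z) := by
  simp only [diagonalTorus, diagonal_mul_diagonal]
  congr 1
  funext i
  simp only [Finset.mem_insert, Finset.mem_singleton]
  grind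

end Roots

theorem statement8_general {n : ℕ} (hn : 2 ≤ n) (t z : ℝ) (hz : z ≠ 0)
    (hzt : z ^ 2 = t) :
    h2n n hn t = hpm n hn z⁻¹ * hpp n hn (-1) * (hpp n hn (-z⁻¹))⁻¹ := by
  let p : Fin (2 * n) := ⟨n - 2, by omega⟩
  let q : Fin (2 * n) := ⟨n - 1, by omega⟩
  let r : Fin (2 * n) := ⟨2 * n - 2, by omega⟩
  let s : Fin (2 * n) := ⟨2 * n - 1, by omega⟩
  have hpq : p ≠ q := Fin.ne_of_val_ne (show n - 2 ≠ n - 1 by omega)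
  have hpr : p ≠ r := Fin.ne_of_val_ne (show n - 2 ≠ 2 * n - 2 by omega)
  have hps : p ≠ s := Fin.ne_of_val_ne (show n - 2 ≠ 2 * n - 1 by omega)
  have hqr : q ≠ r := Fin.ne_of_val_ne (show n - 1 ≠ 2 * n - 2 by omega)
  have hqs : q ≠ s := Fin.ne_of_val_ne (show n - 1 ≠ 2 * n - 1 by omega)
  have hrs : r ≠ s := Fin.ne_of_val_ne (show 2 * n - 2 ≠ 2 * n - 1 by omega)
  have h2 : h2n n hn (z ^ 2) = diagonalTorus {q} {s} (z ^ 2) :=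
    torusElement_single hqs (pow_ne_zero 2 hz)
  have hm : hpm n hn z⁻¹ = diagonalTorus {p, s} {q, r} z⁻¹ :=
    torusElement_single_sub hpq hpr hps hqr hqs hrs (inv_ne_zero hz)
  have hp (u : ℝ) (hu : u ≠ 0) : hpp n hn u = diagonalTorus {p, q} {r, s} u :=
    torusElement_single_add hpq hpr hps hqr hqs hrs hu
  have hu : -z⁻¹ ≠ 0 := neg_ne_zero.2 (inv_ne_zero hz)
  rw [← hzt, h2, hm, hp _ (by norm_num), hp _ hu, diagonalTorus_inv _ _ hu, inv_neg, inv_inv]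
  exact diagonalTorus_sq hpq hps hqs hz

/-- for t > 0 and z ≠ 0 with z² = t,
h_{2L_n}(t) = h_{L_{n-1}-L_n}(z⁻¹) h_{L_{n-1}+L_n}(-1) h_{L_{n-1}+L_n}(-z⁻¹)⁻¹. -/
theorem statement8 {n : ℕ} (hn : 2 ≤ n) (t z : ℝ) (ht : 0 < t) (hz : z ≠ 0)
    (hzt : z ^ 2 = t) :
    h2n n hn t = hpm n hn z⁻¹ * hpp n hn (-1) * (hpp n hn (-z⁻¹))⁻¹ :=
  statement8_general hn t z hz hzt

end
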